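/- The Gaussian isoperimetric profile I_γ = φ ∘ Φ⁻¹ is concave on (0,1). -/

import Mathlib

open Real Set

/-- Standard Gaussian density. -/
noncomputable def phi (t : ℝ) : ℝ := (Real.sqrt (2 * Real.pi))⁻¹ * Real.exp (-t ^ 2 / 2)

/-- Standard Gaussian cumulative distribution function. -/
noncomputable def Phi (t : ℝ) : ℝ := ∫ s in Set.Iic t, phi s

/-!
If a positive density `f` is log-concave, say `f' = g f` with `g` antitone, and `F' = f`, then
for an inverse `G` of `F` the chain rule and the inverse function rule give
`(f ∘ G)' = g (G v) f (G v) / f (G v) = g (G v)`, an antitone function of `v`; hence `f ∘ G` is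
concave. For the Gaussian `g t = -t`.
-/

open MeasureTheory Filter ProbabilityTheory

theorem Monotone.strictMonoOn_of_leftInvOn {α β : Type*} [Preorder α] [LinearOrder β]
    {F : β → α} {G : α → β} {s : Set α} (hF : Monotone F) (h : LeftInvOn F G s) :
    StrictMonoOn G s := by
  intro u hu v hv huv
  by_contra! hle
  have := hF hle
  rw [h hu, h hv] at this
  exact (huv.trans_le this).false

theorem StrictMonoOn.continuousOn_of_image_eq_univ {α β : Type*} [LinearOrder α]
    [TopologicalSpace α] [OrderTopology α] [LinearOrder β] [TopologicalSpace β]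
    [OrderTopology β] [DenselyOrdered β] {f : α → β} {s : Set α} (hf : StrictMonoOn f s)
    (hs : IsOpen s) (hfs : f '' s = univ) : ContinuousOn f s := fun _ ha =>
  (hf.continuousAt_of_image_mem_nhds (hs.mem_nhds ha) (by rw [hfs]; exact univ_mem))
    |>.continuousWithinAt

theorem hasDerivAt_integral_Iic {E : Type*} [NormedAddCommGroup E] [NormedSpace ℝ E]
    [CompleteSpace E] {f : ℝ → E} (hf : Continuous f) (hfi : Integrable f) (x : ℝ) :
    HasDerivAt (fun t => ∫ s in Iic t, f s) (f x) x := by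
  have hsplit :
      (fun t => ∫ s in Iic t, f s) = fun t => (∫ s in Iic 0, f s) + ∫ s in 0..t, f s := by
    ext t
    rw [← intervalIntegral.integral_Iic_sub_Iic hfi.integrableOn hfi.integrableOn,
      add_sub_cancel]
  rw [hsplit]
  exact (intervalIntegral.integral_hasDerivAt_right (hf.intervalIntegrable _ _)
    hf.aestronglyMeasurable.stronglyMeasurableAtFilter hf.continuousAt).const_add _

section LogConcaveProfile

variable {F f g G : ℝ → ℝ} {s : Set ℝ}

theorem hasDerivAt_density_comp_leftInvOn (hs : IsOpen s) (hF : ∀ t, HasDerivAt F (f t) t)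
    (hf : ∀ t, HasDerivAt f (g t * f t) t) (hf₀ : ∀ t, f t ≠ 0) (hG : LeftInvOn F G s)
    (hGc : ContinuousOn G s) {v : ℝ} (hv : v ∈ s) :
    HasDerivAt (fun v => f (G v)) (g (G v)) v := by
  have hG' : HasDerivAt G (f (G v))⁻¹ v :=
    (hF (G v)).of_local_left_inverse (hGc.continuousAt (hs.mem_nhds hv)) (hf₀ _)
      (eventually_of_mem (hs.mem_nhds hv) hG)
  exact ((hf (G v)).comp v hG').congr_deriv
    (by rw [mul_assoc, mul_inv_cancel₀ (hf₀ _), mul_one])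

theorem concaveOn_density_comp_leftInvOn (hs : IsOpen s) (hs' : Convex ℝ s)
    (hF : ∀ t, HasDerivAt F (f t) t) (hf : ∀ t, HasDerivAt f (g t * f t) t)
    (hf₀ : ∀ t, 0 < f t) (hg : Antitone g) (hG : LeftInvOn F G s) (hGc : ContinuousOn G s) :
    ConcaveOn ℝ s (fun v => f (G v)) := by
  have hder v (hv : v ∈ s) : HasDerivAt (fun v => f (G v)) (g (G v)) v :=
    hasDerivAt_density_comp_leftInvOn hs hF hf (fun t => (hf₀ t).ne') hG hGc hv
  have hFmono : Monotone F := monotone_of_deriv_nonneg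
    (fun t => (hF t).differentiableAt) fun t => (hF t).deriv ▸ (hf₀ t).le
  have hGmono := (hFmono.strictMonoOn_of_leftInvOn hG).monotoneOn
  refine AntitoneOn.concaveOn_of_deriv hs'
    (fun v hv => (hder v hv).continuousAt.continuousWithinAt)
    (fun v hv => (hder v (interior_subset hv)).differentiableAt.differentiableWithinAt) ?_
  rw [hs.interior_eq]
  intro u hu v hv huv
  rw [(hder u hu).deriv, (hder v hv).deriv]
  exact hg (hGmono hu hv huv)

end LogConcaveProfile

theorem phi_eq_gaussianPDFReal : phi = gaussianPDFReal 0 1 := by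
  ext t
  simp [phi, gaussianPDFReal]

theorem phi_pos (t : ℝ) : 0 < phi t :=
  phi_eq_gaussianPDFReal ▸ gaussianPDFReal_pos 0 1 t one_ne_zero

theorem continuous_phi : Continuous phi := by
  unfold phi; fun_prop

theorem integrable_phi : Integrable phi :=
  phi_eq_gaussianPDFReal ▸ integrable_gaussianPDFReal 0 1

theorem integral_phi : ∫ t, phi t = 1 :=
  phi_eq_gaussianPDFReal ▸ integral_gaussianPDFReal_eq_one 0 one_ne_zero

theorem hasDerivAt_phi (t : ℝ) : HasDerivAt phi (-t * phi t) t := by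
  have h := (((hasDerivAt_pow 2 t).fun_neg.div_const 2).exp).const_mul
    (Real.sqrt (2 * Real.pi))⁻¹
  exact h.congr_deriv (by simp only [phi]; ring)

theorem hasDerivAt_Phi (t : ℝ) : HasDerivAt Phi (phi t) t :=
  hasDerivAt_integral_Iic continuous_phi integrable_phi t

theorem strictMono_Phi : StrictMono Phi :=
  strictMono_of_deriv_pos fun t => (hasDerivAt_Phi t).deriv ▸ phi_pos t

theorem Phi_mem_Icc (t : ℝ) : Phi t ∈ Icc (0 : ℝ) 1 :=
  ⟨setIntegral_nonneg measurableSet_Iic fun s _ => (phi_pos s).le,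
    integral_phi ▸ setIntegral_le_integral integrable_phi (ae_of_all _ fun s => (phi_pos s).le)⟩

theorem Phi_mem_Ioo (t : ℝ) : Phi t ∈ Ioo (0 : ℝ) 1 :=
  ⟨(Phi_mem_Icc (t - 1)).1.trans_lt (strictMono_Phi (by linarith)),
    (strictMono_Phi (by linarith)).trans_le (Phi_mem_Icc (t + 1)).2⟩

/-- The Gaussian isoperimetric profile `I_γ = φ ∘ Φ⁻¹` is concave on (0,1). -/
theorem stmt_1 (Φinv : ℝ → ℝ)
    (hinv : ∀ v ∈ Set.Ioo (0:ℝ) 1, Phi (Φinv v) = v)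
    (hinv' : ∀ t : ℝ, Φinv (Phi t) = t) :
    ConcaveOn ℝ (Set.Ioo (0:ℝ) 1) (fun v => phi (Φinv v)) := by
  have hmono : StrictMonoOn Φinv (Ioo 0 1) :=
    strictMono_Phi.monotone.strictMonoOn_of_leftInvOn hinv
  have himage : Φinv '' Ioo 0 1 = univ :=
    eq_univ_of_forall fun t => ⟨Phi t, Phi_mem_Ioo t, hinv' t⟩
  exact concaveOn_density_comp_leftInvOn isOpen_Ioo (convex_Ioo 0 1) hasDerivAt_Phi hasDerivAt_phi
    phi_pos (fun _ _ h => neg_le_neg h) hinv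
    (hmono.continuousOn_of_image_eq_univ isOpen_Ioo himage)
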